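/- arXiv:2211.03503 — 3 statements merged into one kernel-verified Lean document; each statement's English description precedes it below -/
import Mathlib

section
/- If f : X → X has the shadowing property, then the set of nonwandering points equals the set of chain recurrent points: Ω(f) = CR(f). -/
open Filter Topology MeasureTheory Set
open scoped ENNReal NNReal

variable {X : Type*} [MetricSpace X]

/-- `x` is in the chain stable set of `y` at scale `ε`: there is a finite sequence of
points starting at `x`, ending at `y`, and positive iteration times `t i` with
`d(f^[t i] (x i), x (i+1)) < ε`. -/
def ChainStable (f : X → X) (ε : ℝ) (x y : X) : Prop :=
  ∃ (n : ℕ) (c : ℕ → X) (t : ℕ → ℕ), 1 ≤ n ∧ c 0 = x ∧ c n = y ∧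
    ∀ i < n, 1 ≤ t i ∧ dist (f^[t i] (c i)) (c (i + 1)) < ε

/-- `x` and `y` are chain related: each is in the chain stable set of the other for every `ε > 0`. -/
def ChainRelated (f : X → X) (x y : X) : Prop :=
  ∀ ε : ℝ, 0 < ε → ChainStable f ε x y ∧ ChainStable f ε y x

/-- The set of chain recurrent points. -/
def ChainRecurrent (f : X → X) : Set X := {x | ChainRelated f x x}

/-- The chain recurrent class of a point `y`. -/
def ChainClassOf (f : X → X) (y : X) : Set X :=
  {x ∈ ChainRecurrent f | ChainRelated f x y}

/-- `Y` is a chain recurrent class. -/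
def IsChainClass (f : X → X) (Y : Set X) : Prop :=
  ∃ y ∈ ChainRecurrent f, Y = ChainClassOf f y

/-- `x` is a nonwandering point of `f`. -/
def NonWandering (f : X → X) (x : X) : Prop :=
  ∀ U : Set X, IsOpen U → x ∈ U → ∃ k : ℕ, 1 ≤ k ∧ (f^[k] '' U ∩ U).Nonempty

/-- `f` has the shadowing property. -/
def ShadowingProperty (f : X → X) : Prop :=
  ∀ ε : ℝ, 0 < ε → ∃ δ : ℝ, 0 < δ ∧ ∀ z : ℕ → X,
    (∀ n, dist (f (z n)) (z (n + 1)) < δ) → ∃ y : X, ∀ n, dist (f^[n] y) (z n) < ε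

/-- `q` is a minimal point: its orbit closure is a minimal set. -/
def MinimalPoint (f : X → X) (q : X) : Prop :=
  ∀ p ∈ closure (Set.range fun n => f^[n] q),
    closure (Set.range fun n => f^[n] p) = closure (Set.range fun n => f^[n] q)

/-- The `(n,ε)`-Bowen ball around `x`. -/
def bowenBall (f : X → X) (n : ℕ) (x : X) (ε : ℝ) : Set X :=
  {y | ∀ i < n, dist (f^[i] x) (f^[i] y) < ε}

/-- `C(Z,t,n,ε,f)`: infimum over countable covers of `Z` by Bowen balls `B_v(x,ε)`, `v ≥ n`,
of `Σ e^{-t v}`. -/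
noncomputable def bowenC (f : X → X) (Z : Set X) (t ε : ℝ) (n : ℕ) : ℝ≥0∞ :=
  ⨅ (c : ℕ → X) (v : ℕ → ℕ) (_ : ∀ i, n ≤ v i)
    (_ : Z ⊆ ⋃ i, bowenBall f (v i) (c i) ε),
    ∑' i, ENNReal.ofReal (Real.exp (-t * v i))

/-- `C(Z,t,ε,f) = lim_{n→∞} C(Z,t,n,ε,f)` (the limit is a supremum by monotonicity). -/
noncomputable def bowenCLim (f : X → X) (Z : Set X) (t ε : ℝ) : ℝ≥0∞ :=
  ⨆ n, bowenC f Z t ε n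

/-- Bowen entropy of `Z` at scale `ε`: `inf {t : C(Z,t,ε,f) = 0}`, valued in `[0,∞]`. -/
noncomputable def bowenH (f : X → X) (Z : Set X) (ε : ℝ) : ℝ≥0∞ :=
  sInf (ENNReal.ofReal '' {t : ℝ | bowenCLim f Z t ε = 0})

/-- Bowen topological entropy of `Z`: `lim_{ε→0} h_Z(f,ε)`, a supremum by monotonicity. -/
noncomputable def bowenEntropy (f : X → X) (Z : Set X) : ℝ≥0∞ :=
  ⨆ (ε : ℝ) (_ : 0 < ε), bowenH f Z ε

/-- Upper relative metric mean dimension of `Z`: `limsup_{ε→0⁺} h_Z(f,ε)/(-log ε)`. -/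
noncomputable def upperMdim (f : X → X) (Z : Set X) : ℝ≥0∞ :=
  Filter.limsup (fun ε : ℝ => bowenH f Z ε / ENNReal.ofReal (-Real.log ε))
    (nhdsWithin 0 (Set.Ioi 0))

/-- Lower relative metric mean dimension of `Z`: `liminf_{ε→0⁺} h_Z(f,ε)/(-log ε)`. -/
noncomputable def lowerMdim (f : X → X) (Z : Set X) : ℝ≥0∞ :=
  Filter.liminf (fun ε : ℝ => bowenH f Z ε / ENNReal.ofReal (-Real.log ε))
    (nhdsWithin 0 (Set.Ioi 0))

/-- Birkhoff average `(1/n) Σ_{i<n} Φ(f^i x)`. -/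
noncomputable def birkhoffAvg (f : X → X) (Φ : X → ℝ) (n : ℕ) (x : X) : ℝ :=
  (1 / (n : ℝ)) * ∑ i ∈ Finset.range n, Φ (f^[i] x)

/-- The `Φ`-irregular set: points where the Birkhoff averages of `Φ` diverge. -/
def IrregularSet (f : X → X) (Φ : X → ℝ) : Set X :=
  {x | ¬ ∃ L : ℝ, Tendsto (fun n => birkhoffAvg f Φ n x) atTop (nhds L)}

/-!
An `ε`-chain from `x` back to `x` is refined, by inserting the intermediate orbit points, into a
`δ`-pseudo-orbit that returns to `x` at some time `T ≥ 1`; repeated periodically and shadowed by a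
point `y`, it shows that `y` and `f^[T] y` both lie in any prescribed neighbourhood of `x`.
Conversely, a point `z` near `x` with `f^[k] z` near `x` yields the `ε`-chain `x, f z, x`, since
`f x` is close to `f z` by continuity.
-/

open Relation

theorem transGen_iff_exists_seq {α : Type*} {r : α → α → Prop} {a b : α} :
    TransGen r a b ↔ ∃ (n : ℕ) (c : ℕ → α), 1 ≤ n ∧ c 0 = a ∧ c n = b ∧
      ∀ i < n, r (c i) (c (i + 1)) := by
  constructor
  · intro h
    induction h with
    | @single b hab => exact ⟨1, fun i => if i = 0 then a else b, le_rfl, rfl, rfl, by simpa⟩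
    | @tail y z _ hyz ih =>
      obtain ⟨n, c, hn, hc0, hcn, hc⟩ := ih
      refine ⟨n + 1, fun i => if i ≤ n then c i else z, by omega, by simpa, by simp, ?_⟩
      intro i hi
      rcases Nat.lt_or_ge i n with hin | hge
      · simpa [hin.le, Nat.succ_le_of_lt hin] using hc i hin
      · obtain rfl : i = n := by omega
        simpa [hcn] using hyz
  · rintro ⟨n, c, hn, rfl, rfl, hc⟩
    induction n, hn using Nat.le_induction with
    | base => exact .single (hc 0 one_pos)
    | succ n _ ih => exact .tail (ih fun i hi => hc i (by omega)) (hc n (by omega))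

theorem rel_mod_of_closed_chain {α : Type*} {r : α → α → Prop} {n : ℕ} {c : ℕ → α}
    (hn : 1 ≤ n) (hclosed : c n = c 0) (hc : ∀ i < n, r (c i) (c (i + 1))) (m : ℕ) :
    r (c (m % n)) (c ((m + 1) % n)) := by
  have hlt : m % n < n := Nat.mod_lt _ hn
  have hsucc : (m + 1) % n = (m % n + 1) % n := (Nat.mod_add_mod m n 1).symm
  rcases Nat.lt_or_ge (m % n + 1) n with hin | hge
  · rw [hsucc, Nat.mod_eq_of_lt hin]
    exact hc _ hlt
  · have hend : m % n + 1 = n := by omega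
    have hwrap : (m + 1) % n = 0 := by rw [hsucc, hend, Nat.mod_self]
    have hstep := hc _ hlt
    rwa [hend, hclosed, ← hwrap] at hstep

def ChainStep (f : X → X) (ε : ℝ) (a b : X) : Prop :=
  ∃ t, 1 ≤ t ∧ dist (f^[t] a) b < ε

theorem chainStable_iff_transGen {f : X → X} {ε : ℝ} {x y : X} :
    ChainStable f ε x y ↔ TransGen (ChainStep f ε) x y := by
  rw [transGen_iff_exists_seq]
  constructor
  · rintro ⟨n, c, t, hn, hc0, hcn, hc⟩
    exact ⟨n, c, hn, hc0, hcn, fun i hi => ⟨t i, hc i hi⟩⟩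
  · rintro ⟨n, c, hn, hc0, hcn, hc⟩
    choose! t ht using hc
    exact ⟨n, c, t, hn, hc0, hcn, ht⟩

theorem ChainStep.transGen_pseudoOrbitStep {f : X → X} {δ : ℝ} {a b : X}
    (h : ChainStep f δ a b) : TransGen (fun u v => dist (f u) v < δ) a b := by
  obtain ⟨t, ht, hdist⟩ := h
  induction t, ht using Nat.le_induction generalizing a with
  | base => exact .single (by simpa using hdist)
  | succ t _ ih =>
    rw [Function.iterate_succ_apply] at hdist
    have hδ : 0 < δ := dist_nonneg.trans_lt hdist
    exact .head (by simpa using hδ) (ih hdist)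

theorem ChainStable.exists_periodic_pseudoOrbit {f : X → X} {δ : ℝ} {x : X}
    (h : ChainStable f δ x x) :
    ∃ (z : ℕ → X) (T : ℕ), 1 ≤ T ∧ z 0 = x ∧ z T = x ∧
      ∀ m, dist (f (z m)) (z (m + 1)) < δ := by
  have hpseudo : TransGen (fun u v => dist (f u) v < δ) x x :=
    TransGen.closed (fun _ _ => ChainStep.transGen_pseudoOrbitStep) _ _
      (chainStable_iff_transGen.1 h)
  obtain ⟨n, c, hn, hc0, hcn, hc⟩ := transGen_iff_exists_seq.1 hpseudo
  refine ⟨fun m => c (m % n), n, hn, by simpa, by simpa, ?_⟩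
  exact rel_mod_of_closed_chain (r := fun u v => dist (f u) v < δ) hn (hcn.trans hc0.symm) hc

theorem NonWandering.mem_chainRecurrent {f : X → X} {x : X} (hf : ContinuousAt f x)
    (hx : NonWandering f x) : x ∈ ChainRecurrent f := by
  intro ε hε
  suffices h : TransGen (ChainStep f ε) x x from
    ⟨chainStable_iff_transGen.2 h, chainStable_iff_transGen.2 h⟩
  obtain ⟨η, hη, hcont⟩ := Metric.continuousAt_iff.1 hf (ε / 2) (half_pos hε)
  obtain ⟨k, hk, _, ⟨z, hz, rfl⟩, hkz⟩ :=
    hx (Metric.ball x (min η (ε / 2))) Metric.isOpen_ball (Metric.mem_ball_self (by positivity))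
  rw [Metric.mem_ball, lt_min_iff] at hz hkz
  have hfz : dist (f x) (f z) < ε / 2 := by
    rw [dist_comm]
    exact hcont hz.1
  rcases Nat.lt_or_ge 1 k with hk2 | hk1
  · have hreturn : f^[k - 1] (f z) = f^[k] z := by
      rw [← Function.iterate_succ_apply, Nat.succ_eq_add_one, Nat.sub_add_cancel hk]
    refine .head ⟨1, le_rfl, by simpa using hfz.trans (half_lt_self hε)⟩
      (.single ⟨k - 1, by omega, ?_⟩)
    rw [hreturn]
    linarith [hkz.2]
  · obtain rfl : k = 1 := le_antisymm hk1 hk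
    refine .single ⟨1, le_rfl, ?_⟩
    calc dist (f^[1] x) x ≤ dist (f x) (f z) + dist (f z) x := dist_triangle _ _ _
      _ < ε / 2 + ε / 2 := add_lt_add hfz (by simpa using hkz.2)
      _ = ε := add_halves ε

theorem ShadowingProperty.nonWandering_of_mem_chainRecurrent {f : X → X}
    (hsh : ShadowingProperty f) {x : X} (hx : x ∈ ChainRecurrent f) : NonWandering f x := by
  intro U hU hxU
  obtain ⟨ε, hε, hball⟩ := Metric.isOpen_iff.1 hU x hxU
  obtain ⟨δ, hδ, hshadow⟩ := hsh ε hε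
  obtain ⟨z, T, hT, hz0, hzT, hz⟩ := ((hx δ hδ).1).exists_periodic_pseudoOrbit
  obtain ⟨y, hy⟩ := hshadow z hz
  have hy0 : y ∈ U := hball (by simpa [hz0] using hy 0)
  have hyT : f^[T] y ∈ U := hball (by simpa [hzT] using hy T)
  exact ⟨T, hT, f^[T] y, ⟨y, hy0, rfl⟩, hyT⟩

theorem nonWandering_eq_chainRecurrent_of_shadowing_general
    (f : X → X) (hf : Continuous f) (hsh : ShadowingProperty f) :
    {x : X | NonWandering f x} = ChainRecurrent f :=
  Set.ext fun _ =>
    ⟨fun hx => hx.mem_chainRecurrent hf.continuousAt, hsh.nonWandering_of_mem_chainRecurrent⟩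

/-- If `f` has the shadowing property then `Ω(f) = CR(f)`. -/
theorem nonWandering_eq_chainRecurrent_of_shadowing [CompactSpace X]
    (f : X → X) (hf : Continuous f) (hsh : ShadowingProperty f) :
    {x : X | NonWandering f x} = ChainRecurrent f :=
  nonWandering_eq_chainRecurrent_of_shadowing_general f hf hsh
end

section
/- Suppose f has the shadowing property and let ε > 0 with δ > 0 chosen so that every δ-pseudo-orbit is (ε/2)-shadowed. If {z_i}_{i≥0} is a periodic δ-pseudo-orbit with period s (i.e., z_{i+s} = z_i for all i), then there exists a minimal point q of (X,f) such that d(z_i, f^i(q)) ≤ ε/2 for all i ≥ 0. -/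
open Filter Topology MeasureTheory Set
open scoped ENNReal NNReal

variable {X : Type*} [MetricSpace X]

/-!
A point shadowing the `s`-periodic pseudo-orbit `z` within `ε / 2` stays so under `f^[s]`, so the
points that trace `z` form a nonempty closed `f^[s]`-invariant set. By Zorn's lemma it contains a
minimal closed `f^[s]`-invariant set, each point of which is minimal for `f^[s]` and hence for `f`.
-/

open Function Set

section OrbitClosure

variable {α : Type*} [TopologicalSpace α]

def orbitClosure (f : α → α) (x : α) : Set α := closure (range fun n => f^[n] x)

def IsMinimalSet (g : α → α) (M : Set α) : Prop :=
  Minimal (fun A : Set α => A.Nonempty ∧ IsClosed A ∧ MapsTo g A A) M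

lemma iterate_mem_orbitClosure (f : α → α) (x : α) (n : ℕ) : f^[n] x ∈ orbitClosure f x :=
  subset_closure ⟨n, rfl⟩

lemma mem_orbitClosure_self (f : α → α) (x : α) : x ∈ orbitClosure f x :=
  iterate_mem_orbitClosure f x 0

lemma orbitClosure_subset {f : α → α} {s : Set α} (hs : IsClosed s) (hfs : MapsTo f s s)
    {x : α} (hx : x ∈ s) : orbitClosure f x ⊆ s :=
  closure_minimal (range_subset_iff.2 fun n => hfs.iterate n hx) hs

lemma mapsTo_orbitClosure {f : α → α} (hf : Continuous f) (x : α) :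
    MapsTo f (orbitClosure f x) (orbitClosure f x) := by
  refine fun y hy => map_mem_closure hf hy ?_
  rintro _ ⟨n, rfl⟩
  exact ⟨n + 1, iterate_succ_apply' f n x⟩

lemma orbitClosure_subset_of_mem {f : α → α} (hf : Continuous f) {x y : α}
    (hy : y ∈ orbitClosure f x) : orbitClosure f y ⊆ orbitClosure f x :=
  orbitClosure_subset isClosed_closure (mapsTo_orbitClosure hf x) hy

lemma orbitClosure_iterate_subset (f : α → α) (s : ℕ) (x : α) :
    orbitClosure f^[s] x ⊆ orbitClosure f x :=
  closure_mono (range_subset_iff.2 fun n => ⟨s * n, congrFun (iterate_mul f s n) x⟩)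

lemma exists_isMinimalSet_subset [CompactSpace α] {g : α → α} {K : Set α} (hK : IsClosed K)
    (hgK : MapsTo g K K) (hKne : K.Nonempty) : ∃ M ⊆ K, IsMinimalSet g M := by
  refine zorn_superset_nonempty _ (fun c hcS hc hcne => ?_) K ⟨hKne, hK, hgK⟩
  have : Nonempty c := hcne.to_subtype
  refine ⟨⋂₀ c, ⟨?_, isClosed_sInter fun A hA => (hcS hA).2.1, fun x hx =>
    mem_sInter.2 fun A hA => (hcS hA).2.2 (hx A hA)⟩, fun A hA => sInter_subset_of_mem hA⟩
  exact IsCompact.nonempty_sInter_of_directed_nonempty_isCompact_isClosed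
    (show IsChain (· ⊇ ·) c from hc.symm).directedOn (fun A hA => (hcS hA).1)
    (fun A hA => (hcS hA).2.1.isCompact) (fun A hA => (hcS hA).2.1)

lemma IsMinimalSet.orbitClosure_eq {g : α → α} {M : Set α} (hM : IsMinimalSet g M)
    (hg : Continuous g) {x : α} (hx : x ∈ M) : orbitClosure g x = M :=
  hM.eq_of_subset
    ⟨⟨x, mem_orbitClosure_self g x⟩, isClosed_closure, mapsTo_orbitClosure hg x⟩
    (orbitClosure_subset hM.prop.2.1 hM.prop.2.2 hx)

end OrbitClosure

lemma minimalPoint_iff {f : X → X} {q : X} :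
    MinimalPoint f q ↔ ∀ p ∈ orbitClosure f q, orbitClosure f p = orbitClosure f q :=
  Iff.rfl

lemma exists_minimalPoint_mem [CompactSpace X] {g : X → X} (hg : Continuous g) {K : Set X}
    (hK : IsClosed K) (hgK : MapsTo g K K) (hKne : K.Nonempty) : ∃ q ∈ K, MinimalPoint g q := by
  obtain ⟨M, hMK, hM⟩ := exists_isMinimalSet_subset hK hgK hKne
  obtain ⟨q, hq⟩ := hM.prop.1
  refine ⟨q, hMK hq, minimalPoint_iff.2 fun p hp => ?_⟩
  rw [hM.orbitClosure_eq hg hq] at hp ⊢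
  exact hM.orbitClosure_eq hg hp

lemma MinimalPoint.of_iterate {f : X → X} (hf : Continuous f) {s : ℕ} (hs : 0 < s) {q : X}
    (hq : MinimalPoint f^[s] q) : MinimalPoint f q := by
  refine minimalPoint_iff.2 fun p hp =>
    (orbitClosure_subset_of_mem hf hp).antisymm (orbitClosure_subset_of_mem hf ?_)
  -- `f^[s - n % s]` sends `f^[n] q` to `f^[s]^[n / s + 1] q`; by closedness some `f^[k] p` with
  -- `k ≤ s` then lies in the `f^[s]`-orbit closure of `q`, whose points all return close to `q`.
  have hcover :
      (range fun n => f^[n] q) ⊆ ⋃ k ∈ Iic s, f^[k] ⁻¹' orbitClosure f^[s] q := by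
    rintro _ ⟨n, rfl⟩
    have hn : s - n % s + n = s * (n / s + 1) := by
      have := Nat.mod_add_div n s
      have := Nat.mod_lt n hs
      rw [Nat.mul_succ]
      omega
    refine mem_biUnion (mem_Iic.2 (Nat.sub_le s (n % s))) ?_
    rw [mem_preimage, ← iterate_add_apply, hn, iterate_mul]
    exact iterate_mem_orbitClosure _ q _
  have hclosed : IsClosed (⋃ k ∈ Iic s, f^[k] ⁻¹' orbitClosure f^[s] q) :=
    (finite_Iic s).isClosed_biUnion fun k _ => isClosed_closure.preimage (hf.iterate k)
  obtain ⟨k, -, hk⟩ : ∃ k ∈ Iic s, f^[k] p ∈ orbitClosure f^[s] q := by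
    simpa only [mem_iUnion, mem_preimage, exists_prop] using closure_minimal hcover hclosed hp
  have hq_mem : q ∈ orbitClosure f^[s] (f^[k] p) :=
    (minimalPoint_iff.1 hq _ hk).symm ▸ mem_orbitClosure_self _ q
  exact orbitClosure_subset_of_mem hf (iterate_mem_orbitClosure f p k)
    (orbitClosure_iterate_subset f s _ hq_mem)

def tracingSet (f : X → X) (z : ℕ → X) (r : ℝ) : Set X :=
  {x | ∀ n, dist (f^[n] x) (z n) ≤ r}

lemma isClosed_tracingSet {f : X → X} (hf : Continuous f) (z : ℕ → X) (r : ℝ) :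
    IsClosed (tracingSet f z r) := by
  simp only [tracingSet, ofPred_forall]
  exact isClosed_iInter fun n =>
    isClosed_le ((hf.iterate n).dist continuous_const) continuous_const

lemma mapsTo_iterate_tracingSet (f : X → X) {z : ℕ → X} {s : ℕ}
    (hper : ∀ i, z (i + s) = z i) (r : ℝ) :
    MapsTo f^[s] (tracingSet f z r) (tracingSet f z r) := fun x hx n => by
  simpa only [← iterate_add_apply, hper] using hx (n + s)

theorem minimal_point_shadows_periodic_pseudo_orbit_general [CompactSpace X]
    (f : X → X) (hf : Continuous f)
    (ε δ : ℝ)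
    (hshad : ∀ z : ℕ → X, (∀ n, dist (f (z n)) (z (n + 1)) < δ) →
      ∃ y : X, ∀ n, dist (f^[n] y) (z n) < ε / 2)
    (z : ℕ → X) (hz : ∀ n, dist (f (z n)) (z (n + 1)) < δ)
    (s : ℕ) (hs : 1 ≤ s) (hper : ∀ i, z (i + s) = z i) :
    ∃ q : X, MinimalPoint f q ∧ ∀ i, dist (z i) (f^[i] q) ≤ ε / 2 := by
  obtain ⟨y, hy⟩ := hshad z hz
  obtain ⟨q, hq_trace, hq_min⟩ := exists_minimalPoint_mem (hf.iterate s)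
    (isClosed_tracingSet hf z (ε / 2)) (mapsTo_iterate_tracingSet f hper _)
    ⟨y, fun n => (hy n).le⟩
  exact ⟨q, hq_min.of_iterate hf hs, fun i => dist_comm (f^[i] q) (z i) ▸ hq_trace i⟩

/-- A periodic `δ`-pseudo-orbit which is `(ε/2)`-shadowed is `(ε/2)`-traced by a minimal point. -/
theorem minimal_point_shadows_periodic_pseudo_orbit [CompactSpace X]
    (f : X → X) (hf : Continuous f) (hsh : ShadowingProperty f)
    (ε δ : ℝ) (hε : 0 < ε) (hδ : 0 < δ)
    (hshad : ∀ z : ℕ → X, (∀ n, dist (f (z n)) (z (n + 1)) < δ) →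
      ∃ y : X, ∀ n, dist (f^[n] y) (z n) < ε / 2)
    (z : ℕ → X) (hz : ∀ n, dist (f (z n)) (z (n + 1)) < δ)
    (s : ℕ) (hs : 1 ≤ s) (hper : ∀ i, z (i + s) = z i) :
    ∃ q : X, MinimalPoint f q ∧ ∀ i, dist (z i) (f^[i] q) ≤ ε / 2 :=
  minimal_point_shadows_periodic_pseudo_orbit_general f hf ε δ hshad z hz s hs hper
end

section
/- Pressure Distribution Principle (simplified): Let f : X → X be continuous on a compact metric space and Z ⊆ X Borel. Suppose there are ε > 0, s ∈ ℝ, K > 0, and a sequence of Borel probability measures {μ_k} such that (1) μ_k converges in weak* topology to a measure μ with μ(Z) > 0, and (2) limsup_{k→∞} μ_k(B_n(x,ε)) ≤ K e^{-ns} for every sufficiently large n and every Bowen ball B_n(x,ε) with B_n(x,ε) ∩ Z ≠ ∅. Then h_Z(f,ε) ≥ s. -/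
/-!
Take a cover of `Z` by Bowen balls `B_{v_i}(x_i, ε)` with `v_i ≥ n`; only the balls meeting `Z`
matter, so a bound `μ(B_v(x, ε)) ≤ C e^{-sv}` for such balls gives
`μ(Z) ≤ C Σ e^{-s v_i}`, i.e. `C(Z, s, n, ε) ≥ μ(Z) / C > 0` for all large `n`. Since
`C(Z, t, n, ε)` is antitone in `t`, no `t < s` can have `C(Z, t, ε) = 0`, whence `h_Z(f, ε) ≥ s`.
The bound for the weak* limit `μ` follows from the limsup bound for the `μ_k` by the portmanteau
theorem, Bowen balls being open.
-/

open Filter Topology MeasureTheory Set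
open scoped ENNReal NNReal

variable {X : Type*} [MetricSpace X]

theorem isOpen_bowenBall {f : X → X} (hf : Continuous f) (n : ℕ) (x : X) (ε : ℝ) :
    IsOpen (bowenBall f n x ε) := by
  have h : bowenBall f n x ε = ⋂ i ∈ Finset.range n, f^[i] ⁻¹' Metric.ball (f^[i] x) ε := by
    ext y
    simp [bowenBall, Metric.mem_ball, dist_comm]
  rw [h]
  exact isOpen_biInter_finset fun i _ => (hf.iterate i).isOpen_preimage _ Metric.isOpen_ball

theorem bowenC_antitone (f : X → X) (Z : Set X) (ε : ℝ) (n : ℕ) :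
    Antitone fun t => bowenC f Z t ε n := by
  intro t s hts
  refine iInf_mono fun c => iInf_mono fun v => iInf_mono fun _ => iInf_mono fun _ => ?_
  refine ENNReal.tsum_le_tsum fun i => ENNReal.ofReal_le_ofReal (Real.exp_le_exp.mpr ?_)
  nlinarith [(v i).cast_nonneg (α := ℝ)]

theorem measure_div_le_bowenC [MeasurableSpace X] (μ : Measure X) (f : X → X) (Z : Set X)
    (s ε : ℝ) (C : ℝ≥0∞) (n : ℕ)
    (hμ : ∀ m ≥ n, ∀ x, (bowenBall f m x ε ∩ Z).Nonempty →
      μ (bowenBall f m x ε) ≤ C * ENNReal.ofReal (Real.exp (-s * m))) :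
    μ Z / C ≤ bowenC f Z s ε n := by
  refine le_iInf fun c => le_iInf fun v => le_iInf fun hv => le_iInf fun hcov => ?_
  refine ENNReal.div_le_of_le_mul' ?_
  have hball : ∀ i, μ (bowenBall f (v i) (c i) ε ∩ Z)
      ≤ C * ENNReal.ofReal (Real.exp (-s * v i)) := by
    intro i
    rcases (bowenBall f (v i) (c i) ε ∩ Z).eq_empty_or_nonempty with hempty | hmeets
    · simp [hempty]
    · exact (measure_mono inter_subset_left).trans (hμ (v i) (hv i) (c i) hmeets)
  calc μ Z ≤ μ (⋃ i, bowenBall f (v i) (c i) ε ∩ Z) := by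
        rw [← iUnion_inter]
        exact measure_mono (subset_inter hcov le_rfl)
    _ ≤ ∑' i, μ (bowenBall f (v i) (c i) ε ∩ Z) := measure_iUnion_le _
    _ ≤ ∑' i, C * ENNReal.ofReal (Real.exp (-s * v i)) := ENNReal.tsum_le_tsum hball
    _ = C * ∑' i, ENNReal.ofReal (Real.exp (-s * v i)) := ENNReal.tsum_mul_left

theorem ofReal_le_bowenH_of_measure_bowenBall_le [MeasurableSpace X] (μ : Measure X)
    (f : X → X) (Z : Set X) (s ε : ℝ) (C : ℝ≥0∞) (hC : C ≠ ∞) (hZ : μ Z ≠ 0) (N : ℕ)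
    (hμ : ∀ n ≥ N, ∀ x, (bowenBall f n x ε ∩ Z).Nonempty →
      μ (bowenBall f n x ε) ≤ C * ENNReal.ofReal (Real.exp (-s * n))) :
    ENNReal.ofReal s ≤ bowenH f Z ε := by
  refine le_sInf ?_
  rintro _ ⟨t, ht, rfl⟩
  refine ENNReal.ofReal_le_ofReal (not_lt.mp fun hts => ?_)
  have hCt : bowenC f Z t ε N = 0 := ENNReal.iSup_eq_zero.mp ht N
  have hdiv : μ Z / C = 0 := le_antisymm
    ((measure_div_le_bowenC μ f Z s ε C N hμ).trans
      ((bowenC_antitone f Z ε N hts.le).trans hCt.le)) bot_le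
  exact (ENNReal.div_eq_zero_iff.mp hdiv).elim hZ hC

theorem pressure_distribution_principle_general
    [MeasurableSpace X] [BorelSpace X]
    (f : X → X) (hf : Continuous f) (Z : Set X)
    (ε s K : ℝ)
    (μseq : ℕ → Measure X) (hprob : ∀ k, IsProbabilityMeasure (μseq k))
    (μ : Measure X) (hμprob : IsProbabilityMeasure μ)
    (hconv : ∀ g : X → ℝ, Continuous g →
      Tendsto (fun k => ∫ x, g x ∂(μseq k)) atTop (nhds (∫ x, g x ∂μ)))
    (hpos : 0 < μ Z)
    (hbound : ∃ N : ℕ, ∀ n ≥ N, ∀ x : X, (bowenBall f n x ε ∩ Z).Nonempty →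
      Filter.limsup (fun k => μseq k (bowenBall f n x ε)) atTop ≤
        ENNReal.ofReal (K * Real.exp (-(n : ℝ) * s))) :
    ENNReal.ofReal s ≤ bowenH f Z ε := by
  obtain ⟨N, hN⟩ := hbound
  have hweak : Tendsto (β := ProbabilityMeasure X) (fun k => ⟨μseq k, hprob k⟩) atTop
      (𝓝 ⟨μ, hμprob⟩) :=
    ProbabilityMeasure.tendsto_iff_forall_integral_tendsto.mpr fun g => hconv g g.continuous
  refine ofReal_le_bowenH_of_measure_bowenBall_le μ f Z s ε (ENNReal.ofReal K)
    ENNReal.ofReal_ne_top hpos.ne' N fun n hn x hx => ?_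
  calc μ (bowenBall f n x ε)
      ≤ atTop.liminf fun k => μseq k (bowenBall f n x ε) :=
        ProbabilityMeasure.le_liminf_measure_open_of_tendsto hweak (isOpen_bowenBall hf n x ε)
    _ ≤ atTop.limsup fun k => μseq k (bowenBall f n x ε) := liminf_le_limsup
    _ ≤ ENNReal.ofReal (K * Real.exp (-(n : ℝ) * s)) := hN n hn x hx
    _ = ENNReal.ofReal K * ENNReal.ofReal (Real.exp (-s * n)) := by
        rw [← ENNReal.ofReal_mul' (Real.exp_pos _).le, neg_mul, mul_comm (n : ℝ), ← neg_mul]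

/-- Simplified Pressure Distribution Principle. -/
theorem pressure_distribution_principle [CompactSpace X]
    [MeasurableSpace X] [BorelSpace X]
    (f : X → X) (hf : Continuous f) (Z : Set X) (hZBorel : MeasurableSet Z)
    (ε s K : ℝ) (hε : 0 < ε) (hK : 0 < K)
    (μseq : ℕ → Measure X) (hprob : ∀ k, IsProbabilityMeasure (μseq k))
    (μ : Measure X) (hμprob : IsProbabilityMeasure μ)
    (hconv : ∀ g : X → ℝ, Continuous g →
      Tendsto (fun k => ∫ x, g x ∂(μseq k)) atTop (nhds (∫ x, g x ∂μ)))
    (hpos : 0 < μ Z)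
    (hbound : ∃ N : ℕ, ∀ n ≥ N, ∀ x : X, (bowenBall f n x ε ∩ Z).Nonempty →
      Filter.limsup (fun k => μseq k (bowenBall f n x ε)) atTop ≤
        ENNReal.ofReal (K * Real.exp (-(n : ℝ) * s))) :
    ENNReal.ofReal s ≤ bowenH f Z ε :=
  pressure_distribution_principle_general f hf Z ε s K μseq hprob μ hμprob hconv hpos hbound
end
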